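/- arXiv:2209.10189 — 6 statements merged into one kernel-verified Lean document; each statement's English description precedes it below -/
import Mathlib

section
/- Lieb's variational principle (finite-dimensional form): for every integer N with 1 ≤ N ≤ d, the infimum of ℰ_HF(γ) over all admissible γ with Tr γ = N equals the infimum of ℰ_HF(γ) over all orthogonal projection matrices γ (γ = γᴴ and γ² = γ) with Tr γ = N. In other words, relaxing the projection constraint γ = γ² to the operator inequalities 0 ⪯ γ ⪯ 1 does not change the Hartree–Fock ground state energy. -/
open Matrix
open scoped Kronecker ComplexOrder

/-- The exchange matrix `Ex[(i,j),(k,l)] = δ_{il} δ_{jk}` on `ℂ^d ⊗ ℂ^d`. -/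
noncomputable def exchangeMatrix (d : ℕ) : Matrix (Fin d × Fin d) (Fin d × Fin d) ℂ :=
  Matrix.of fun p q => if p.1 = q.2 ∧ p.2 = q.1 then 1 else 0

/-- The Hartree–Fock energy functional
`ℰ_HF(γ) = Re Tr(h γ) + (1/2) Re Tr(V (1 − Ex)(γ ⊗ γ))`. -/
noncomputable def hfEnergy {d : ℕ} (h : Matrix (Fin d) (Fin d) ℂ)
    (V : Matrix (Fin d × Fin d) (Fin d × Fin d) ℂ)
    (γ : Matrix (Fin d) (Fin d) ℂ) : ℝ :=
  ((h * γ).trace).re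
    + (1 / 2) * ((V * ((1 : Matrix (Fin d × Fin d) (Fin d × Fin d) ℂ) - exchangeMatrix d)
        * (γ ⊗ₖ γ)).trace).re

/-- `γ` is admissible iff it is Hermitian with `0 ⪯ γ ⪯ 1`. -/
def HFAdmissible {d : ℕ} (γ : Matrix (Fin d) (Fin d) ℂ) : Prop :=
  γ.PosSemidef ∧ ((1 : Matrix (Fin d) (Fin d) ℂ) - γ).PosSemidef

/-! Diagonalise an admissible `γ = U diag(μ) U*`: the occupation numbers `μ` lie in the
hypersimplex `{μ ∈ [0,1]^d | ∑ μ = N}`. Along an edge direction `e_i - e_j` the matrix moves by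
`Δ = u_i u_i* - u_j u_j*`, and the energy is a quadratic polynomial in the step whose leading
coefficient `½ Re Tr(V (1 - Ex)(Δ ⊗ Δ)) = -½ ⟨u_i ∧ u_j, V (u_i ∧ u_j)⟩` is `≤ 0`. So the energy
does not increase when two fractional occupation numbers are pushed until one of them reaches
`0` or `1`; finitely many pushes reach a vertex `μ ∈ {0,1}^d`, i.e. a projection of trace `N`. -/

open Set

theorem concaveOn_quadratic {a b c : ℝ} (hc : c ≤ 0) :
    ConcaveOn ℝ univ fun t : ℝ => a + b * t + c * t ^ 2 := by
  refine ⟨convex_univ, fun x _ y _ p q hp hq hpq => ?_⟩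
  obtain rfl : q = 1 - p := by linarith
  simp only [smul_eq_mul]
  nlinarith [mul_nonneg (mul_nonneg hp hq) (mul_nonneg (neg_nonneg.2 hc) (sq_nonneg (x - y)))]

theorem eq_zero_or_eq_one_of_mem_Icc_of_notMem_Ioo {x : ℝ} (h₁ : x ∈ Icc 0 1)
    (h₂ : x ∉ Ioo 0 1) : x = 0 ∨ x = 1 := by
  have hx : x ∈ Icc (0 : ℝ) 1 \ Ioo 0 1 := ⟨h₁, h₂⟩
  rwa [Icc_sdiff_Ioo_same zero_le_one, mem_insert_iff, mem_singleton_iff] at hx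

section Hypersimplex

variable {ι : Type*} [DecidableEq ι]

def edgeDir (i j : ι) : ι → ℝ := Pi.single i 1 - Pi.single j 1

variable {μ : ι → ℝ} {i j : ι}

theorem add_smul_edgeDir_apply_left (hij : i ≠ j) (t : ℝ) :
    (μ + t • edgeDir i j) i = μ i + t := by
  simp [edgeDir, hij]

theorem add_smul_edgeDir_apply_right (hij : i ≠ j) (t : ℝ) :
    (μ + t • edgeDir i j) j = μ j - t := by
  simp [edgeDir, hij.symm, sub_eq_add_neg]

theorem add_smul_edgeDir_apply_of_ne {k : ι} (hki : k ≠ i) (hkj : k ≠ j) (t : ℝ) :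
    (μ + t • edgeDir i j) k = μ k := by
  simp [edgeDir, hki, hkj]

theorem add_smul_edgeDir_mem_Icc (hμ : ∀ k, μ k ∈ Icc 0 1) (hij : i ≠ j) {t : ℝ}
    (hti : μ i + t ∈ Icc 0 1) (htj : μ j - t ∈ Icc 0 1) (k : ι) :
    (μ + t • edgeDir i j) k ∈ Icc 0 1 := by
  by_cases hki : k = i
  · rwa [hki, add_smul_edgeDir_apply_left hij]
  by_cases hkj : k = j
  · rwa [hkj, add_smul_edgeDir_apply_right hij]
  rw [add_smul_edgeDir_apply_of_ne hki hkj]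
  exact hμ k

variable [Fintype ι]

theorem sum_add_smul_edgeDir (t : ℝ) : ∑ k, (μ + t • edgeDir i j) k = ∑ k, μ k := by
  simp [edgeDir, Finset.sum_add_distrib, Finset.sum_sub_distrib, ← Finset.mul_sum]

noncomputable def fractionalCoords (μ : ι → ℝ) : Finset ι := {i | μ i ∈ Ioo 0 1}

theorem exists_ne_mem_Ioo_of_sum_eq_natCast {N : ℕ} (hμ : ∀ k, μ k ∈ Icc 0 1)
    (hsum : ∑ k, μ k = N) (hi : μ i ∈ Ioo 0 1) : ∃ j ≠ i, μ j ∈ Ioo 0 1 := by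
  by_contra! hfrac
  have hbool : ∀ k ∈ Finset.univ.erase i, μ k = if μ k = 1 then 1 else 0 := fun k hk => by
    rcases eq_zero_or_eq_one_of_mem_Icc_of_notMem_Ioo (hμ k)
      (hfrac k (Finset.ne_of_mem_erase hk)) with h | h <;> simp [h]
  set m := ({k ∈ Finset.univ.erase i | μ k = 1} : Finset ι).card
  have hμi : μ i = N - m := by
    rw [← hsum, ← Finset.add_sum_erase _ _ (Finset.mem_univ i), Finset.sum_congr rfl hbool,
      Finset.sum_boole]
    ring
  obtain ⟨h₀, h₁⟩ := hi
  rw [hμi] at h₀ h₁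
  have : m < N := by exact_mod_cast sub_pos.1 h₀
  have : N < m + 1 := by exact_mod_cast (by linarith : (N : ℝ) < m + 1)
  omega

theorem fractionalCoords_add_smul_edgeDir_ssubset (hi : μ i ∈ Ioo 0 1) (hj : μ j ∈ Ioo 0 1)
    {t : ℝ} (ht : (μ + t • edgeDir i j) i ∉ Ioo 0 1 ∨ (μ + t • edgeDir i j) j ∉ Ioo 0 1) :
    fractionalCoords (μ + t • edgeDir i j) ⊂ fractionalCoords μ := by
  simp only [fractionalCoords]
  rw [Finset.ssubset_iff_of_subset]
  · rcases ht with h | h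
    exacts [⟨i, by simpa using hi, by simpa using h⟩, ⟨j, by simpa using hj, by simpa using h⟩]
  · intro k hk
    simp only [Finset.mem_filter, Finset.mem_univ, true_and] at hk ⊢
    by_cases hki : k = i
    · exact hki ▸ hi
    by_cases hkj : k = j
    · exact hkj ▸ hj
    rwa [add_smul_edgeDir_apply_of_ne hki hkj] at hk

variable {N : ℕ} (E : (ι → ℝ) → ℝ)
  (hE : ∀ μ i j, ConcaveOn ℝ univ fun t : ℝ => E (μ + t • edgeDir i j))
include hE

theorem exists_edge_step_le (hμ : ∀ k, μ k ∈ Icc 0 1) (hsum : ∑ k, μ k = N)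
    (hi : μ i ∈ Ioo 0 1) :
    ∃ μ' : ι → ℝ, (∀ k, μ' k ∈ Icc 0 1) ∧ ∑ k, μ' k = N ∧
      fractionalCoords μ' ⊂ fractionalCoords μ ∧ E μ' ≤ E μ := by
  obtain ⟨j, hji, hj⟩ := exists_ne_mem_Ioo_of_sum_eq_natCast hμ hsum hi
  have hij := hji.symm
  have ⟨hi₀, hi₁⟩ := hi
  have ⟨hj₀, hj₁⟩ := hj
  -- `a ≤ 0 ≤ b` are the largest steps along `edgeDir i j` keeping coordinates `i`, `j` in `[0, 1]`.
  set a := -min (μ i) (1 - μ j)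
  set b := min (1 - μ i) (μ j)
  have hmin₁ := min_le_left (μ i) (1 - μ j)
  have hmin₂ := min_le_right (μ i) (1 - μ j)
  have hmin₃ := min_le_left (1 - μ i) (μ j)
  have hmin₄ := min_le_right (1 - μ i) (μ j)
  have hmin₅ : 0 ≤ min (μ i) (1 - μ j) := le_min hi₀.le (by linarith)
  have hmin₆ : 0 ≤ min (1 - μ i) (μ j) := le_min (by linarith) hj₀.le
  have hend : ∀ t ∈ ({a, b} : Set ℝ), μ i + t ∈ Icc 0 1 ∧ μ j - t ∈ Icc 0 1 ∧
      (μ i + t ∉ Ioo 0 1 ∨ μ j - t ∉ Ioo 0 1) := by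
    rintro t (rfl | rfl)
    · refine ⟨⟨by linarith, by linarith⟩, ⟨by linarith, by linarith⟩, ?_⟩
      rcases min_choice (μ i) (1 - μ j) with h | h
      · left; simp [a, h]
      · right; simp [a, h]
    · refine ⟨⟨by linarith, by linarith⟩, ⟨by linarith, by linarith⟩, ?_⟩
      rcases min_choice (1 - μ i) (μ j) with h | h
      · left; simp [b, h]
      · right; simp [b, h]
  have hmin : min (E (μ + a • edgeDir i j)) (E (μ + b • edgeDir i j)) ≤ E μ := by
    simpa using (hE μ i j).min_le_of_mem_Icc trivial trivial
      (⟨by linarith, by linarith⟩ : (0 : ℝ) ∈ Icc a b)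
  obtain ⟨t, ht, hle⟩ : ∃ t ∈ ({a, b} : Set ℝ), E (μ + t • edgeDir i j) ≤ E μ := by
    rcases min_le_iff.1 hmin with h | h
    exacts [⟨a, .inl rfl, h⟩, ⟨b, .inr rfl, h⟩]
  obtain ⟨hti, htj, hhit⟩ := hend t ht
  refine ⟨_, add_smul_edgeDir_mem_Icc hμ hij hti htj, (sum_add_smul_edgeDir t).trans hsum,
    fractionalCoords_add_smul_edgeDir_ssubset hi hj ?_, hle⟩
  rwa [add_smul_edgeDir_apply_left hij, add_smul_edgeDir_apply_right hij]

theorem exists_vertex_le_of_concaveOn_edgeDir (hμ : ∀ k, μ k ∈ Icc 0 1)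
    (hsum : ∑ k, μ k = N) :
    ∃ ν : ι → ℝ, (∀ k, ν k = 0 ∨ ν k = 1) ∧ ∑ k, ν k = N ∧ E ν ≤ E μ := by
  induction hn : (fractionalCoords μ).card using Nat.strong_induction_on generalizing μ with
  | _ n ih =>
  by_cases hfrac : ∃ i, μ i ∈ Ioo 0 1
  · obtain ⟨i, hi⟩ := hfrac
    obtain ⟨μ', hμ', hsum', hlt, hle⟩ := exists_edge_step_le E hE hμ hsum hi
    obtain ⟨ν, hν, hνsum, hνle⟩ := ih _ (hn ▸ Finset.card_lt_card hlt) hμ' hsum' rfl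
    exact ⟨ν, hν, hνsum, hνle.trans hle⟩
  · push Not at hfrac
    exact ⟨μ, fun k => eq_zero_or_eq_one_of_mem_Icc_of_notMem_Ioo (hμ k) (hfrac k), hsum, le_rfl⟩

end Hypersimplex

section ConjDiagonal

variable {n : Type*} [Fintype n] [DecidableEq n]

theorem Matrix.PosSemidef.eigenvalues_mem_Icc_of_one_sub {A : Matrix n n ℂ} (hA : A.PosSemidef)
    (hA₁ : (1 - A).PosSemidef) (i : n) : hA.1.eigenvalues i ∈ Icc 0 1 := by
  refine ⟨hA.eigenvalues_nonneg i, ?_⟩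
  set v := hA.1.eigenvectorBasis i
  have hv : star ⇑v ⬝ᵥ ⇑v = 1 := by
    rw [dotProduct_comm, ← EuclideanSpace.inner_eq_star_dotProduct, inner_self_eq_norm_sq_to_K,
      hA.1.eigenvectorBasis.orthonormal.1 i]
    simp
  have h := (Complex.le_def.1 (hA₁.dotProduct_mulVec_nonneg v)).1
  rw [sub_mulVec, one_mulVec, dotProduct_sub, hv, Complex.sub_re, Complex.zero_re,
    Complex.one_re, ← RCLike.re_to_complex, ← hA.1.eigenvalues_eq i] at h
  linarith

noncomputable def conjDiagonal (U : Matrix n n ℂ) (μ : n → ℝ) : Matrix n n ℂ :=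
  U * diagonal (fun i => (μ i : ℂ)) * star U

theorem Matrix.IsHermitian.eq_conjDiagonal {A : Matrix n n ℂ} (hA : A.IsHermitian) :
    A = conjDiagonal hA.eigenvectorUnitary hA.eigenvalues := by
  conv_lhs => rw [hA.spectral_theorem, Unitary.conjStarAlgAut_apply]
  rfl

theorem conjDiagonal_add_smul (U : Matrix n n ℂ) (μ δ : n → ℝ) (t : ℝ) :
    conjDiagonal U (μ + t • δ) = conjDiagonal U μ + (t : ℂ) • conjDiagonal U δ := by
  have hdiag : diagonal (fun i => ((μ + t • δ) i : ℂ))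
      = diagonal (fun i => (μ i : ℂ)) + (t : ℂ) • diagonal (fun i => (δ i : ℂ)) := by
    rw [← diagonal_smul, diagonal_add]
    congr 1
    ext i
    simp
  rw [conjDiagonal, hdiag, mul_add, add_mul, mul_smul_comm, smul_mul_assoc]
  rfl

theorem conjDiagonal_single (U : Matrix n n ℂ) (i : n) :
    conjDiagonal U (Pi.single i 1) = vecMulVec (Uᵀ i) (star (Uᵀ i)) := by
  ext k l
  simp [conjDiagonal, mul_apply, diagonal_apply, Pi.single_apply, vecMulVec_apply, apply_ite]

theorem conjDiagonal_edgeDir (U : Matrix n n ℂ) (i j : n) :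
    conjDiagonal U (edgeDir i j) =
      vecMulVec (Uᵀ i) (star (Uᵀ i)) - vecMulVec (Uᵀ j) (star (Uᵀ j)) := by
  have h : edgeDir i j = Pi.single i 1 + (-1 : ℝ) • Pi.single j 1 := by
    simp [edgeDir, sub_eq_add_neg]
  rw [h, conjDiagonal_add_smul, conjDiagonal_single, conjDiagonal_single]
  simp [sub_eq_add_neg]

theorem isHermitian_conjDiagonal (U : Matrix n n ℂ) (μ : n → ℝ) :
    (conjDiagonal U μ).IsHermitian := by
  simpa [conjDiagonal, star_eq_conjTranspose] using
    isHermitian_mul_mul_conjTranspose U (isHermitian_diagonal_of_self_adjoint _ (by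
      ext i; simp))

variable {U : Matrix n n ℂ} (hU : star U * U = 1)
include hU

theorem conjDiagonal_mul_conjDiagonal (μ ν : n → ℝ) :
    conjDiagonal U μ * conjDiagonal U ν = conjDiagonal U (μ * ν) := by
  simp only [conjDiagonal, mul_assoc]
  rw [← mul_assoc (star U), hU, one_mul, ← mul_assoc (Matrix.diagonal _), diagonal_mul_diagonal]
  simp

theorem trace_conjDiagonal (μ : n → ℝ) : (conjDiagonal U μ).trace = ∑ i, (μ i : ℂ) := by
  rw [conjDiagonal, trace_mul_cycle, hU, one_mul, trace_diagonal]

end ConjDiagonal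

theorem Matrix.IsHermitian.posSemidef_of_mul_self_eq {𝕜 n : Type*} [RCLike 𝕜] [Fintype n]
    {P : Matrix n n 𝕜} (hP : P.IsHermitian) (hPP : P * P = P) : P.PosSemidef := by
  have h : Pᴴ * P = P := by rw [hP.eq, hPP]
  exact h ▸ posSemidef_conjTranspose_mul_self P

section HartreeFock

variable {d : ℕ}

theorem Matrix.IsHermitian.hfAdmissible_of_mul_self_eq {P : Matrix (Fin d) (Fin d) ℂ}
    (hP : P.IsHermitian) (hPP : P * P = P) : HFAdmissible P := by
  refine ⟨hP.posSemidef_of_mul_self_eq hPP,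
    (isHermitian_one.sub hP).posSemidef_of_mul_self_eq ?_⟩
  rw [sub_mul, mul_sub, mul_sub, one_mul, mul_one, one_mul, hPP, sub_self, sub_zero]

theorem exchangeMatrix_mul_apply (X : Matrix (Fin d × Fin d) (Fin d × Fin d) ℂ)
    (q p : Fin d × Fin d) : (exchangeMatrix d * X) q p = X q.swap p := by
  rw [mul_apply, Finset.sum_eq_single q.swap]
  · simp [exchangeMatrix]
  · intro r _ hr
    have : ¬(q.1 = r.2 ∧ q.2 = r.1) := fun ⟨h₁, h₂⟩ => hr (Prod.ext h₂.symm h₁.symm)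
    simp [exchangeMatrix, this]
  · simp

def wedge (u v : Fin d → ℂ) : Fin d × Fin d → ℂ := fun p => u p.1 * v p.2 - v p.1 * u p.2

-- The direct and exchange terms of `uu* ⊗ uu*` and of `vv* ⊗ vv*` cancel; the cross terms
-- assemble into `-|u ∧ v⟩⟨u ∧ v|`.
theorem trace_interaction_sub_vecMulVec (V : Matrix (Fin d × Fin d) (Fin d × Fin d) ℂ)
    (u v : Fin d → ℂ) :
    (V * (1 - exchangeMatrix d) * ((vecMulVec u (star u) - vecMulVec v (star v)) ⊗ₖ
      (vecMulVec u (star u) - vecMulVec v (star v)))).trace =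
      -(star (wedge u v) ⬝ᵥ V *ᵥ wedge u v) := by
  rw [mul_assoc, Matrix.sub_mul, Matrix.one_mul]
  simp only [trace, diag_apply, mul_apply (M := V), Matrix.sub_apply, exchangeMatrix_mul_apply,
    dotProduct, mulVec, Finset.mul_sum, ← Finset.sum_neg_distrib]
  refine Finset.sum_congr rfl fun p _ => Finset.sum_congr rfl fun q _ => ?_
  simp only [wedge, kroneckerMap_apply, Matrix.sub_apply, vecMulVec_apply, Pi.star_apply, star_sub,
    star_mul', Prod.fst_swap, Prod.snd_swap]
  ring

theorem re_trace_interaction_sub_vecMulVec_nonpos {V : Matrix (Fin d × Fin d) (Fin d × Fin d) ℂ}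
    (hV : V.PosSemidef) (u v : Fin d → ℂ) :
    ((V * (1 - exchangeMatrix d) * ((vecMulVec u (star u) - vecMulVec v (star v)) ⊗ₖ
      (vecMulVec u (star u) - vecMulVec v (star v)))).trace).re ≤ 0 := by
  rw [trace_interaction_sub_vecMulVec, Complex.neg_re, neg_nonpos]
  exact (Complex.le_def.1 (hV.dotProduct_mulVec_nonneg (wedge u v))).1

theorem concaveOn_hfEnergy_add_smul (h : Matrix (Fin d) (Fin d) ℂ)
    (V : Matrix (Fin d × Fin d) (Fin d × Fin d) ℂ) (A Δ : Matrix (Fin d) (Fin d) ℂ)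
    (hΔ : ((V * (1 - exchangeMatrix d) * (Δ ⊗ₖ Δ)).trace).re ≤ 0) :
    ConcaveOn ℝ univ fun t : ℝ => hfEnergy h V (A + (t : ℂ) • Δ) := by
  have hquad : ∀ t : ℝ, hfEnergy h V (A + (t : ℂ) • Δ) = hfEnergy h V A
      + (((h * Δ).trace).re + (1 / 2) * (((V * (1 - exchangeMatrix d) * (A ⊗ₖ Δ)).trace).re
          + ((V * (1 - exchangeMatrix d) * (Δ ⊗ₖ A)).trace).re)) * t
      + (1 / 2) * ((V * (1 - exchangeMatrix d) * (Δ ⊗ₖ Δ)).trace).re * t ^ 2 := fun t => by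
    simp only [hfEnergy, add_kronecker, kronecker_add, smul_kronecker, kronecker_smul,
      Matrix.mul_add, Matrix.mul_smul, trace_add, trace_smul, smul_eq_mul,
      Complex.add_re, Complex.re_ofReal_mul]
    ring
  simp_rw [hquad]
  exact concaveOn_quadratic (by linarith)

theorem exists_projection_hfEnergy_le (h : Matrix (Fin d) (Fin d) ℂ)
    {V : Matrix (Fin d × Fin d) (Fin d × Fin d) ℂ} (hV : V.PosSemidef) {N : ℕ}
    {γ : Matrix (Fin d) (Fin d) ℂ} (hγ : HFAdmissible γ) (htr : γ.trace = N) :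
    ∃ P : Matrix (Fin d) (Fin d) ℂ, P.IsHermitian ∧ P * P = P ∧ P.trace = N ∧
      hfEnergy h V P ≤ hfEnergy h V γ := by
  set U : Matrix (Fin d) (Fin d) ℂ := ↑hγ.1.1.eigenvectorUnitary
  have hU : star U * U = 1 := Unitary.coe_star_mul_self _
  have hconc : ∀ μ i j, ConcaveOn ℝ univ fun t : ℝ =>
      hfEnergy h V (conjDiagonal U (μ + t • edgeDir i j)) := fun μ i j => by
    simp_rw [conjDiagonal_add_smul]
    refine concaveOn_hfEnergy_add_smul h V _ _ ?_
    rw [conjDiagonal_edgeDir]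
    exact re_trace_interaction_sub_vecMulVec_nonpos hV _ _
  have hsum : ∑ i, hγ.1.1.eigenvalues i = N := by
    apply Complex.ofReal_injective
    push_cast
    exact hγ.1.1.trace_eq_sum_eigenvalues.symm.trans htr
  obtain ⟨ν, hν, hνsum, hle⟩ := exists_vertex_le_of_concaveOn_edgeDir
    (fun μ => hfEnergy h V (conjDiagonal U μ)) hconc (hγ.1.eigenvalues_mem_Icc_of_one_sub hγ.2)
    hsum
  refine ⟨conjDiagonal U ν, isHermitian_conjDiagonal U ν, ?_, ?_, ?_⟩
  · rw [conjDiagonal_mul_conjDiagonal hU]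
    congr 1
    ext k
    rcases hν k with hk | hk <;> simp [hk]
  · rw [trace_conjDiagonal hU]
    exact_mod_cast hνsum
  · rwa [← hγ.1.1.eq_conjDiagonal] at hle

end HartreeFock

theorem lieb_variational_principle_general (d N : ℕ)
    (h : Matrix (Fin d) (Fin d) ℂ)
    (V : Matrix (Fin d × Fin d) (Fin d × Fin d) ℂ) (hV : V.PosSemidef) :
    sInf {e : ℝ | ∃ γ : Matrix (Fin d) (Fin d) ℂ,
        HFAdmissible γ ∧ γ.trace = (N : ℂ) ∧ e = hfEnergy h V γ}
      = sInf {e : ℝ | ∃ γ : Matrix (Fin d) (Fin d) ℂ,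
        γ.IsHermitian ∧ γ * γ = γ ∧ γ.trace = (N : ℂ) ∧ e = hfEnergy h V γ} := by
  refine csInf_eq_csInf_of_forall_exists_le ?_ ?_
  · rintro _ ⟨γ, hγ, htr, rfl⟩
    obtain ⟨P, hP, hPP, hPtr, hle⟩ := exists_projection_hfEnergy_le h hV hγ htr
    exact ⟨_, ⟨P, hP, hPP, hPtr, rfl⟩, hle⟩
  · rintro _ ⟨P, hP, hPP, hPtr, rfl⟩
    exact ⟨_, ⟨P, hP.hfAdmissible_of_mul_self_eq hPP, hPtr, rfl⟩, le_rfl⟩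

/-- **Lieb's variational principle** (finite-dimensional form): relaxing the projection
constraint `γ = γ²` to `0 ⪯ γ ⪯ 1` does not change the Hartree–Fock ground state energy. -/
theorem lieb_variational_principle (d N : ℕ) (hd : 1 ≤ d) (hN1 : 1 ≤ N) (hNd : N ≤ d)
    (h : Matrix (Fin d) (Fin d) ℂ) (hh : h.IsHermitian)
    (V : Matrix (Fin d × Fin d) (Fin d × Fin d) ℂ) (hV : V.PosSemidef)
    (hVEx : exchangeMatrix d * V * exchangeMatrix d = V) :
    sInf {e : ℝ | ∃ γ : Matrix (Fin d) (Fin d) ℂ,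
        HFAdmissible γ ∧ γ.trace = (N : ℂ) ∧ e = hfEnergy h V γ}
      = sInf {e : ℝ | ∃ γ : Matrix (Fin d) (Fin d) ℂ,
        γ.IsHermitian ∧ γ * γ = γ ∧ γ.trace = (N : ℂ) ∧ e = hfEnergy h V γ} :=
  lieb_variational_principle_general d N h V hV
end

section
/- Every minimizer of the relaxed Hartree–Fock problem is a projection: assume in addition that V is strictly positive on antisymmetric vectors, i.e., ⟨ψ, V ψ⟩ > 0 for every nonzero ψ ∈ ℂ^d ⊗ ℂ^d with Ex ψ = −ψ. If γ₀ is admissible with Tr γ₀ = N (1 ≤ N ≤ d an integer) and ℰ_HF(γ₀) ≤ ℰ_HF(γ) for every admissible γ with Tr γ = N, then γ₀ is an orthogonal projection, γ₀² = γ₀. -/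
open Matrix
open scoped Kronecker ComplexOrder

lemma exchangeMatrix_apply {d : ℕ} (p q : Fin d × Fin d) :
    exchangeMatrix d p q = if q = (p.2, p.1) then 1 else 0 := by
  simp only [exchangeMatrix, Matrix.of_apply]
  congr 1
  simp [Prod.ext_iff, and_comm, eq_comm]

lemma exchange_mul_apply {d : ℕ} (M : Matrix (Fin d × Fin d) (Fin d × Fin d) ℂ)
    (p q : Fin d × Fin d) : (exchangeMatrix d * M) p q = M (p.2, p.1) q := by
  rw [Matrix.mul_apply]
  rw [Finset.sum_eq_single (p.2, p.1)]
  · simp [exchangeMatrix_apply]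
  · intro b _ hb
    rw [exchangeMatrix_apply, if_neg (by exact fun hc => hb hc), zero_mul]
  · simp

lemma exchange_mulVec_apply {d : ℕ} (ψ : Fin d × Fin d → ℂ) (p : Fin d × Fin d) :
    (exchangeMatrix d *ᵥ ψ) p = ψ (p.2, p.1) := by
  rw [Matrix.mulVec, dotProduct]
  rw [Finset.sum_eq_single (p.2, p.1)]
  · simp [exchangeMatrix_apply]
  · intro b _ hb
    rw [exchangeMatrix_apply, if_neg (by exact fun hc => hb hc), zero_mul]
  · simp

lemma key_identity {d : ℕ} (u v : Fin d → ℂ) :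
    ((1 : Matrix (Fin d × Fin d) (Fin d × Fin d) ℂ) - exchangeMatrix d) *
      ((vecMulVec u (star u) - vecMulVec v (star v)) ⊗ₖ
        (vecMulVec u (star u) - vecMulVec v (star v)))
    = - vecMulVec (fun p : Fin d × Fin d => u p.1 * v p.2 - v p.1 * u p.2)
        (star fun p : Fin d × Fin d => u p.1 * v p.2 - v p.1 * u p.2) := by
  ext p q
  rw [Matrix.sub_mul, Matrix.one_mul, Matrix.sub_apply, exchange_mul_apply]
  simp only [Matrix.kroneckerMap_apply, Matrix.sub_apply, Matrix.vecMulVec_apply,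
    Pi.star_apply, Matrix.neg_apply, star_sub, star_mul']
  ring

lemma trace_mul_vecMulVec {n : Type*} [Fintype n] (M : Matrix n n ℂ) (x y : n → ℂ) :
    (M * vecMulVec x y).trace = y ⬝ᵥ (M *ᵥ x) := by
  rw [Matrix.trace, dotProduct]
  apply Finset.sum_congr rfl
  intro a _
  rw [Matrix.diag_apply, Matrix.mul_apply, Matrix.mulVec, dotProduct, Finset.mul_sum]
  apply Finset.sum_congr rfl
  intro b _
  rw [Matrix.vecMulVec_apply]
  ring

lemma hfEnergy_aux_expand {d : ℕ} (h : Matrix (Fin d) (Fin d) ℂ)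
    (V : Matrix (Fin d × Fin d) (Fin d × Fin d) ℂ)
    (γ Δ : Matrix (Fin d) (Fin d) ℂ) (t : ℝ) :
    ((h * (γ + (t:ℂ) • Δ)).trace).re
    + (1 / 2) * ((V * ((1 : Matrix (Fin d × Fin d) (Fin d × Fin d) ℂ) - exchangeMatrix d)
        * ((γ + (t:ℂ) • Δ) ⊗ₖ (γ + (t:ℂ) • Δ))).trace).re
    = (((h * γ).trace).re
        + (1 / 2) * ((V * ((1 : Matrix (Fin d × Fin d) (Fin d × Fin d) ℂ) - exchangeMatrix d)
            * (γ ⊗ₖ γ)).trace).re)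
      + t * (((h * Δ).trace).re
          + (1/2) * ((V * (1 - exchangeMatrix d) * (γ ⊗ₖ Δ + Δ ⊗ₖ γ)).trace).re)
      + t^2 * ((1/2) * ((V * (1 - exchangeMatrix d) * (Δ ⊗ₖ Δ)).trace).re) := by
  have hk : (γ + (t:ℂ) • Δ) ⊗ₖ (γ + (t:ℂ) • Δ)
      = γ ⊗ₖ γ + (t:ℂ) • (γ ⊗ₖ Δ + Δ ⊗ₖ γ) + ((t:ℂ) * (t:ℂ)) • (Δ ⊗ₖ Δ) := by
    simp only [Matrix.add_kronecker, Matrix.kronecker_add, Matrix.smul_kronecker,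
      Matrix.kronecker_smul, smul_smul, smul_add]
    abel
  rw [hk]
  simp only [mul_add, Matrix.mul_smul, trace_add, trace_smul]
  have hre : ∀ (z : ℂ), ((t:ℂ) • z).re = t * z.re := fun z => by
    rw [smul_eq_mul, Complex.re_ofReal_mul]
  have hre2 : ∀ (z : ℂ), (((t:ℂ) * (t:ℂ)) • z).re = t^2 * z.re := fun z => by
    rw [smul_eq_mul, ← Complex.ofReal_mul, Complex.re_ofReal_mul]; ring
  simp only [Complex.add_re, hre, hre2]
  ring

/-- If the pair interaction `V` is strictly positive on antisymmetric vectors, then any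
minimizer of the relaxed Hartree–Fock problem is an orthogonal projection. -/
theorem minimizer_is_projection (d N : ℕ) (hd : 1 ≤ d) (hN1 : 1 ≤ N) (hNd : N ≤ d)
    (h : Matrix (Fin d) (Fin d) ℂ) (hh : h.IsHermitian)
    (V : Matrix (Fin d × Fin d) (Fin d × Fin d) ℂ) (hV : V.PosSemidef)
    (hVEx : exchangeMatrix d * V * exchangeMatrix d = V)
    (hVpos : ∀ ψ : Fin d × Fin d → ℂ, ψ ≠ 0 → (exchangeMatrix d) *ᵥ ψ = -ψ →
      0 < star ψ ⬝ᵥ (V *ᵥ ψ))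
    (γ₀ : Matrix (Fin d) (Fin d) ℂ) (hγ₀ : HFAdmissible γ₀) (htr : γ₀.trace = (N : ℂ))
    (hmin : ∀ γ : Matrix (Fin d) (Fin d) ℂ, HFAdmissible γ → γ.trace = (N : ℂ) →
      hfEnergy h V γ₀ ≤ hfEnergy h V γ) :
    γ₀ * γ₀ = γ₀ := by
  classical
  by_contra hproj
  obtain ⟨hps, hps1⟩ := hγ₀
  have hherm : γ₀.IsHermitian := hps.1
  obtain ⟨U, hUmem, hspec⟩ : ∃ U : Matrix (Fin d) (Fin d) ℂ,
      U ∈ Matrix.unitaryGroup (Fin d) ℂ ∧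
      γ₀ = U * diagonal (fun k => ((hherm.eigenvalues k : ℝ) : ℂ)) * star U :=
    ⟨hherm.eigenvectorUnitary, hherm.eigenvectorUnitary.2, hherm.spectral_theorem⟩
  set lam : Fin d → ℝ := hherm.eigenvalues with hlam
  have hU2 : U * star U = 1 := (Matrix.mem_unitaryGroup_iff).mp hUmem
  have hU1 : star U * U = 1 := (Matrix.mem_unitaryGroup_iff').mp hUmem
  have hcancel : ∀ X : Matrix (Fin d) (Fin d) ℂ, star U * (U * X) = X := by
    intro X; rw [← Matrix.mul_assoc, hU1, Matrix.one_mul]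
  -- positivity of conjugated diagonals
  have hposdiag : ∀ g : Fin d → ℝ, (∀ k, 0 ≤ g k) →
      (U * diagonal (fun k => ((g k : ℝ) : ℂ)) * star U).PosSemidef := by
    intro g hg
    have h1 : (diagonal (fun k => ((g k : ℝ) : ℂ))).PosSemidef :=
      posSemidef_diagonal_iff.mpr fun k => Complex.zero_le_real.mpr (hg k)
    have h2 := h1.mul_mul_conjTranspose_same U
    rwa [← Matrix.star_eq_conjTranspose] at h2
  -- eigenvalue bounds
  have h0 : ∀ k, 0 ≤ lam k := fun k => hps.eigenvalues_nonneg k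
  have hle1 : ∀ k, lam k ≤ 1 := by
    intro k
    have h1γ : (1 : Matrix (Fin d) (Fin d) ℂ) - γ₀
        = U * diagonal (fun k => ((1 - lam k : ℝ) : ℂ)) * star U := by
      have hd1 : diagonal (fun k => ((1 - lam k : ℝ) : ℂ))
          = 1 - diagonal (fun k => ((lam k : ℝ) : ℂ)) := by
        rw [← Matrix.diagonal_one, diagonal_sub]
        congr 1; funext k; simp
      rw [hd1, Matrix.mul_sub, Matrix.sub_mul, Matrix.mul_one, hU2, ← hspec]
    have hconj : diagonal (fun k => ((1 - lam k : ℝ) : ℂ))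
        = Uᴴ * ((1 : Matrix (Fin d) (Fin d) ℂ) - γ₀) * U := by
      rw [h1γ, ← Matrix.star_eq_conjTranspose]
      simp only [Matrix.mul_assoc]
      rw [hU1, Matrix.mul_one, hcancel]
    have hdiagpsd : (diagonal (fun k => ((1 - lam k : ℝ) : ℂ))).PosSemidef :=
      hconj ▸ (hps1.conjTranspose_mul_mul_same U)
    have h2 := posSemidef_diagonal_iff.mp hdiagpsd k
    rw [Complex.zero_le_real] at h2
    linarith
  -- not all eigenvalues in {0,1}
  have hnotall : ¬ ∀ k, lam k = 0 ∨ lam k = 1 := by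
    intro hall
    apply hproj
    rw [hspec]
    have hsq : diagonal (fun k => ((lam k : ℝ) : ℂ)) * diagonal (fun k => ((lam k : ℝ) : ℂ))
        = diagonal (fun k => ((lam k : ℝ) : ℂ)) := by
      rw [diagonal_mul_diagonal]
      have hf : (fun k => ((lam k : ℝ) : ℂ) * ((lam k : ℝ) : ℂ)) = fun k => ((lam k : ℝ) : ℂ) := by
        funext k
        rcases hall k with h' | h' <;> simp [h']
      exact congrArg diagonal hf
    calc (U * diagonal (fun k => ((lam k : ℝ) : ℂ)) * star U)
          * (U * diagonal (fun k => ((lam k : ℝ) : ℂ)) * star U)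
        = U * (diagonal (fun k => ((lam k : ℝ) : ℂ))
            * diagonal (fun k => ((lam k : ℝ) : ℂ))) * star U := by
          simp only [Matrix.mul_assoc, hcancel]
      _ = U * diagonal (fun k => ((lam k : ℝ) : ℂ)) * star U := by
          rw [hsq, Matrix.mul_assoc]
  push_neg at hnotall
  obtain ⟨i, hi0, hi1⟩ := hnotall
  -- sum of eigenvalues
  have hsum : ∑ k, lam k = (N : ℝ) := by
    have h1 : γ₀.trace = ∑ k, ((lam k : ℝ) : ℂ) := by
      rw [hspec, Matrix.trace_mul_cycle, hU1, Matrix.one_mul, trace_diagonal]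
    rw [htr] at h1
    have h2 : ((∑ k, lam k : ℝ) : ℂ) = ((N : ℝ) : ℂ) := by
      push_cast
      rw [← h1]
    exact_mod_cast h2
  -- find second fractional eigenvalue
  have hj : ∃ j, j ≠ i ∧ lam j ≠ 0 ∧ lam j ≠ 1 := by
    by_contra hcon
    push_neg at hcon
    have hsplit : ∑ k ∈ Finset.univ.erase i, lam k
        = ((Finset.univ.erase i).filter (fun k => lam k = 1)).card := by
      rw [← Finset.sum_boole]
      apply Finset.sum_congr rfl
      intro k hk
      have hki : k ≠ i := Finset.ne_of_mem_erase hk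
      by_cases h1' : lam k = 1
      · simp [h1']
      · have h0' : lam k = 0 := by
          by_contra h0''
          exact h1' (hcon k hki h0'')
        simp [h0', h1']
    have htoti : lam i + ∑ k ∈ Finset.univ.erase i, lam k = (N : ℝ) := by
      rw [Finset.add_sum_erase Finset.univ lam (Finset.mem_univ i)]
      exact hsum
    set m : ℕ := ((Finset.univ.erase i).filter (fun k => lam k = 1)).card with hm
    have hlami : lam i = (N : ℝ) - m := by
      rw [hsplit] at htoti; linarith
    have h0i : 0 < lam i := lt_of_le_of_ne (h0 i) (Ne.symm hi0)
    have h1i : lam i < 1 := lt_of_le_of_ne (hle1 i) hi1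
    have hz1 : (0 : ℤ) < (N : ℤ) - m := by
      have : (0:ℝ) < ((N : ℤ) - m : ℤ) := by push_cast; linarith
      exact_mod_cast this
    have hz2 : ((N : ℤ) - m : ℤ) < 1 := by
      have : (((N : ℤ) - m : ℤ) : ℝ) < 1 := by push_cast; linarith
      exact_mod_cast this
    omega
  obtain ⟨j, hji, hj0, hj1⟩ := hj
  have hij : i ≠ j := fun h' => hji h'.symm
  -- strict bounds
  have h0i : 0 < lam i := lt_of_le_of_ne (h0 i) (Ne.symm hi0)
  have h1i : lam i < 1 := lt_of_le_of_ne (hle1 i) hi1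
  have h0j : 0 < lam j := lt_of_le_of_ne (h0 j) (Ne.symm hj0)
  have h1j : lam j < 1 := lt_of_le_of_ne (hle1 j) hj1
  -- eigenvector columns
  set u : Fin d → ℂ := fun k => U k i with hu
  set v : Fin d → ℂ := fun k => U k j with hv
  -- outer product form of conjugated indicator diagonals
  have hconj_e : ∀ i0 : Fin d, U * diagonal (fun k => if k = i0 then (1:ℂ) else 0) * star U
      = vecMulVec (fun k => U k i0) (star fun k => U k i0) := by
    intro i0
    ext k l
    rw [Matrix.mul_apply]
    simp only [Matrix.mul_diagonal, Matrix.star_apply, Matrix.vecMulVec_apply, Pi.star_apply]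
    rw [Finset.sum_eq_single i0]
    · simp
    · intro b _ hb; simp [hb]
    · simp
  set dc : Fin d → ℂ := fun k => (if k = i then (1:ℂ) else 0) - (if k = j then (1:ℂ) else 0)
    with hdc
  set Δ : Matrix (Fin d) (Fin d) ℂ := U * diagonal dc * star U with hΔdiag
  have hΔouter : Δ = vecMulVec u (star u) - vecMulVec v (star v) := by
    have hds : diagonal dc = diagonal (fun k => if k = i then (1:ℂ) else 0)
        - diagonal (fun k => if k = j then (1:ℂ) else 0) := by
      rw [diagonal_sub]
    rw [hΔdiag, hds, Matrix.mul_sub, Matrix.sub_mul, hconj_e i, hconj_e j]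
  -- the antisymmetric vector
  set ψ : Fin d × Fin d → ℂ := fun p => u p.1 * v p.2 - v p.1 * u p.2 with hψ
  -- orthonormality
  have horth : ∀ a b : Fin d, ∑ k, star (U k a) * U k b = if a = b then (1:ℂ) else 0 := by
    intro a b
    have h1 := congrFun (congrFun hU1 a) b
    simpa [Matrix.mul_apply, Matrix.star_apply, Matrix.one_apply] using h1
  have hψne : ψ ≠ 0 := by
    intro h0ψ
    have hfac : ∀ k l : Fin d, star (u k) * u k * (star (v l) * v l)
        = star (u k) * v k * (star (v l) * u l) := by
      intro k l
      have hkl : u k * v l - v k * u l = 0 := by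
        have h2 := congrFun h0ψ (k, l)
        simpa [hψ] using h2
      linear_combination (star (u k) * star (v l)) * hkl
    have hmul : (∑ k, star (u k) * u k) * (∑ l, star (v l) * v l)
        = (∑ k, star (u k) * v k) * (∑ l, star (v l) * u l) := by
      rw [Finset.sum_mul_sum, Finset.sum_mul_sum]
      exact Finset.sum_congr rfl fun k _ => Finset.sum_congr rfl fun l _ => hfac k l
    have e1 : (∑ k, star (u k) * u k) = 1 := by simpa using horth i i
    have e2 : (∑ k, star (u k) * v k) = 0 := by simpa [hij] using horth i j
    have e3 : (∑ l, star (v l) * u l) = 0 := by simpa [hij.symm] using horth j i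
    have e4 : (∑ l, star (v l) * v l) = 1 := by simpa using horth j j
    rw [e1, e2, e3, e4] at hmul
    simpa using hmul
  have hψanti : exchangeMatrix d *ᵥ ψ = -ψ := by
    funext p
    rw [exchange_mulVec_apply]
    simp only [hψ, Pi.neg_apply]
    ring
  have hquad : 0 < star ψ ⬝ᵥ (V *ᵥ ψ) := hVpos ψ hψne hψanti
  -- the energy coefficients
  set A : ℝ := ((h * Δ).trace).re
      + (1/2) * ((V * (1 - exchangeMatrix d) * (γ₀ ⊗ₖ Δ + Δ ⊗ₖ γ₀)).trace).re with hA
  set B : ℝ := (1/2) * ((V * (1 - exchangeMatrix d) * (Δ ⊗ₖ Δ)).trace).re with hB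
  have hexpand : ∀ t : ℝ, hfEnergy h V (γ₀ + (t:ℂ) • Δ) = hfEnergy h V γ₀ + t * A + t^2 * B := by
    intro t
    rw [hA, hB]
    simp only [hfEnergy]
    exact hfEnergy_aux_expand h V γ₀ Δ t
  have hBval : B = -((1/2) * ((star ψ ⬝ᵥ (V *ᵥ ψ)).re)) := by
    have h1 : V * (1 - exchangeMatrix d) * (Δ ⊗ₖ Δ) = -(V * vecMulVec ψ (star ψ)) := by
      rw [Matrix.mul_assoc, hΔouter, key_identity, Matrix.mul_neg]
    rw [hB, h1, trace_neg, trace_mul_vecMulVec]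
    simp
  have hBneg : B < 0 := by
    have hre : 0 < (star ψ ⬝ᵥ (V *ᵥ ψ)).re := (Complex.lt_def.mp hquad).1
    rw [hBval]; linarith
  -- the perturbation window
  set ε : ℝ := min (min (lam i) (1 - lam i)) (min (lam j) (1 - lam j)) with hεdef
  have hε : 0 < ε := by
    refine lt_min (lt_min ?_ ?_) (lt_min ?_ ?_) <;> linarith
  have hεi : ε ≤ lam i := le_trans (min_le_left _ _) (min_le_left _ _)
  have hεi' : ε ≤ 1 - lam i := le_trans (min_le_left _ _) (min_le_right _ _)
  have hεj : ε ≤ lam j := le_trans (min_le_right _ _) (min_le_left _ _)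
  have hεj' : ε ≤ 1 - lam j := le_trans (min_le_right _ _) (min_le_right _ _)
  -- the perturbed diagonal
  set gR : ℝ → Fin d → ℝ := fun t k =>
    lam k + t * ((if k = i then 1 else 0) - (if k = j then 1 else 0)) with hgR
  have hform : ∀ t : ℝ, γ₀ + (t:ℂ) • Δ
      = U * diagonal (fun k => ((gR t k : ℝ) : ℂ)) * star U := by
    intro t
    have hdiagsum : diagonal (fun k => ((gR t k : ℝ) : ℂ))
        = diagonal (fun k => ((lam k : ℝ) : ℂ)) + (t:ℂ) • diagonal dc := by
      ext k l
      rcases eq_or_ne k l with rfl | hkl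
      · simp only [Matrix.add_apply, Matrix.smul_apply, Matrix.diagonal_apply_eq, smul_eq_mul,
          hgR, hdc]
        split_ifs <;> push_cast <;> ring
      · simp [Matrix.diagonal_apply_ne _ hkl]
    rw [hdiagsum, Matrix.mul_add, Matrix.add_mul, Matrix.mul_smul, Matrix.smul_mul, ← hspec,
      ← hΔdiag]
  have hgi : ∀ t : ℝ, gR t i = lam i + t := by intro t; simp [hgR, hij]
  have hgj : ∀ t : ℝ, gR t j = lam j - t := by intro t; simp [hgR, hji]; ring
  have hgo : ∀ (t : ℝ) (k : Fin d), k ≠ i → k ≠ j → gR t k = lam k := by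
    intro t k h1 h2; simp [hgR, h1, h2]
  have hbnds : ∀ t : ℝ, |t| ≤ ε → ∀ k, 0 ≤ gR t k ∧ gR t k ≤ 1 := by
    intro t ht k
    obtain ⟨htl, htr'⟩ := abs_le.mp ht
    by_cases hki : k = i
    · subst hki
      rw [hgi]
      constructor <;> linarith
    · by_cases hkj : k = j
      · subst hkj
        rw [hgj]
        constructor <;> linarith
      · rw [hgo t k hki hkj]
        constructor <;> [linarith [h0 k]; linarith [hle1 k]]
  have hadm : ∀ t : ℝ, |t| ≤ ε → HFAdmissible (γ₀ + (t:ℂ) • Δ) := by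
    intro t ht
    constructor
    · rw [hform t]
      exact hposdiag _ (fun k => (hbnds t ht k).1)
    · have h1γ : (1 : Matrix (Fin d) (Fin d) ℂ) - (γ₀ + (t:ℂ) • Δ)
          = U * diagonal (fun k => ((1 - gR t k : ℝ) : ℂ)) * star U := by
        have hd1 : diagonal (fun k => ((1 - gR t k : ℝ) : ℂ))
            = 1 - diagonal (fun k => ((gR t k : ℝ) : ℂ)) := by
          rw [← Matrix.diagonal_one, diagonal_sub]
          congr 1; funext k; simp
        rw [hd1, Matrix.mul_sub, Matrix.sub_mul, Matrix.mul_one, hU2, ← hform t]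
      rw [h1γ]
      exact hposdiag _ (fun k => by linarith [(hbnds t ht k).2])
  -- trace preservation
  have htrΔ : Δ.trace = 0 := by
    rw [hΔdiag, Matrix.trace_mul_cycle, hU1, Matrix.one_mul, trace_diagonal]
    simp only [hdc]
    rw [Finset.sum_sub_distrib]
    simp [Finset.sum_ite_eq']
  have htrt : ∀ t : ℝ, (γ₀ + (t:ℂ) • Δ).trace = (N : ℂ) := by
    intro t
    rw [trace_add, trace_smul, htrΔ, htr]
    simp
  -- the variational inequality
  have hineq : ∀ t : ℝ, |t| ≤ ε → 0 ≤ t * A + t^2 * B := by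
    intro t ht
    have h1 := hmin _ (hadm t ht) (htrt t)
    rw [hexpand t] at h1
    linarith
  -- derive contradiction
  set t0 : ℝ := if 0 ≤ A then -ε else ε with ht0def
  have ht0abs : |t0| ≤ ε := by
    rw [ht0def]; split_ifs <;> simp [abs_of_nonneg hε.le, abs_of_pos hε, le_refl]
  have ht0A : t0 * A ≤ 0 := by
    rw [ht0def]; split_ifs with hA0
    · nlinarith
    · nlinarith [le_of_not_ge hA0]
  have ht0sq : t0^2 = ε^2 := by
    rw [ht0def]; split_ifs <;> ring
  have h1 := hineq t0 ht0abs
  rw [ht0sq] at h1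
  have h2 : ε^2 * B < 0 := mul_neg_of_pos_of_neg (pow_pos hε 2) hBneg
  linarith
end

section
/- Lieb's lemma on prescribed occupation numbers: let N ≤ J be positive integers and let λ : Fin J → ℝ satisfy 0 ≤ λ_j ≤ 1 for every j and Σ_{j=1}^J λ_j = N. Then there exists an orthonormal family of N vectors G^{(1)}, …, G^{(N)} in ℂ^J such that Σ_{n=1}^N |G^{(n)}_j|² = λ_j for every j ∈ {1,…,J}. -/
/-!
Induction on `J`. If `λ₀ + λ₁ ≤ 1`, merge the first two coordinates into one with occupation
`λ₀ + λ₁`; otherwise give them occupations `1` and `λ₀ + λ₁ - 1` and split off the `1`, which is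
carried by an extra basis vector, leaving `N - 1` vectors. Either way a solution of the smaller
problem yields `N` orthonormal vectors in which every vector vanishes in coordinate 0 or in
coordinate 1, and whose occupations in these coordinates are `c` and `λ₀ + λ₁ - c` with
`c ∈ {0, 1}`. Because of the disjoint supports, a real rotation in the plane of these two
coordinates mixes their occupations convexly, without any cross term, and it reaches
`(λ₀, λ₁)` since `λ₀` lies between `c` and `λ₀ + λ₁ - c`.
-/

open Finset
open scoped InnerProductSpace

namespace EuclideanSpace

variable {𝕜 : Type*}

section Cons

variable {n : ℕ}

def cons (x : 𝕜) (v : EuclideanSpace 𝕜 (Fin n)) : EuclideanSpace 𝕜 (Fin (n + 1)) :=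
  WithLp.toLp 2 (Fin.cons x v.ofLp)

@[simp] lemma cons_zero (x : 𝕜) (v : EuclideanSpace 𝕜 (Fin n)) : cons x v 0 = x := rfl

@[simp] lemma cons_succ (x : 𝕜) (v : EuclideanSpace 𝕜 (Fin n)) (j : Fin n) :
    cons x v j.succ = v j := rfl

@[simp] lemma inner_cons_cons [RCLike 𝕜] (x y : 𝕜) (v w : EuclideanSpace 𝕜 (Fin n)) :
    ⟪cons x v, cons y w⟫_𝕜 = ⟪x, y⟫_𝕜 + ⟪v, w⟫_𝕜 := by
  simp [PiLp.inner_apply, Fin.sum_univ_succ]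

end Cons

section PlaneRotation

variable [RCLike 𝕜] {κ : Type*} [DecidableEq κ]

def planeRotation (a b : κ) (α β : ℝ) (v : EuclideanSpace 𝕜 κ) : EuclideanSpace 𝕜 κ :=
  WithLp.toLp 2 fun j =>
    if j = a then α * v a + β * v b else if j = b then -β * v a + α * v b else v j

lemma inner_planeRotation [Fintype κ] {a b : κ} (hab : a ≠ b) {α β : ℝ}
    (hαβ : α ^ 2 + β ^ 2 = 1) (v w : EuclideanSpace 𝕜 κ) :
    ⟪planeRotation a b α β v, planeRotation a b α β w⟫_𝕜 = ⟪v, w⟫_𝕜 := by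
  have hαβ' : (α : 𝕜) ^ 2 + (β : 𝕜) ^ 2 = 1 := by exact_mod_cast hαβ
  rw [PiLp.inner_apply, PiLp.inner_apply, ← sub_eq_zero, ← sum_sub_distrib,
    Fintype.sum_eq_add a b hab fun j ⟨hja, hjb⟩ => by simp [planeRotation, hja, hjb]]
  simp only [planeRotation, RCLike.inner_apply', if_pos, if_neg hab.symm, map_add, map_mul,
    map_neg, RCLike.conj_ofReal]
  linear_combination (starRingEnd 𝕜 (v a) * w a + starRingEnd 𝕜 (v b) * w b) * hαβ'

end PlaneRotation

end EuclideanSpace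

open EuclideanSpace

variable {𝕜 : Type*} [RCLike 𝕜]

lemma Orthonormal.comp_of_inner_eq {E F ι : Type*} [NormedAddCommGroup E]
    [InnerProductSpace 𝕜 E] [NormedAddCommGroup F] [InnerProductSpace 𝕜 F] {v : ι → E}
    (hv : Orthonormal 𝕜 v) {f : E → F} (hf : ∀ x y, ⟪f x, f y⟫_𝕜 = ⟪x, y⟫_𝕜) :
    Orthonormal 𝕜 (f ∘ v) := by
  classical
  rw [orthonormal_iff_ite] at hv ⊢
  intro i j
  rw [Function.comp_apply, Function.comp_apply, hf, hv]

lemma norm_ofReal_mul_add_sq_of_eq_zero_or {x y : 𝕜} (h : x = 0 ∨ y = 0) (α β : ℝ) :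
    ‖(α : 𝕜) * x + β * y‖ ^ 2 = α ^ 2 * ‖x‖ ^ 2 + β ^ 2 * ‖y‖ ^ 2 := by
  rcases h with rfl | rfl <;> simp [norm_mul, mul_pow]

section Occupation

variable {ι κ : Type*}

def occupation [Fintype ι] (G : ι → EuclideanSpace 𝕜 κ) (j : κ) : ℝ :=
  ∑ n, ‖G n j‖ ^ 2

lemma occupation_planeRotation_comp [Fintype ι] [DecidableEq κ] {G : ι → EuclideanSpace 𝕜 κ}
    {a b : κ} (hsupp : ∀ n, G n a = 0 ∨ G n b = 0) (α β : ℝ) (j : κ) :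
    occupation (planeRotation a b α β ∘ G) j =
      if j = a then α ^ 2 * occupation G a + β ^ 2 * occupation G b
      else if j = b then β ^ 2 * occupation G a + α ^ 2 * occupation G b
      else occupation G j := by
  have hnorm := fun n => norm_ofReal_mul_add_sq_of_eq_zero_or (hsupp n)
  unfold occupation
  split_ifs with hja hjb
  · simp only [Function.comp_apply, planeRotation, PiLp.toLp_apply, if_pos hja, hnorm,
      sum_add_distrib, mul_sum]
  · simp only [Function.comp_apply, planeRotation, PiLp.toLp_apply, if_neg hja, if_pos hjb,
      ← RCLike.ofReal_neg, hnorm, neg_sq, sum_add_distrib, mul_sum]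
  · simp only [Function.comp_apply, planeRotation, PiLp.toLp_apply, if_neg hja, if_neg hjb]

variable {N J : ℕ}

lemma occupation_cons_zero_comp [Fintype ι] (H : ι → EuclideanSpace 𝕜 (Fin J)) :
    occupation (cons 0 ∘ H) = Fin.cons 0 (occupation H) := by
  ext j
  cases j using Fin.cases <;> simp [occupation]

lemma Orthonormal.cons_zero_comp {H : ι → EuclideanSpace 𝕜 (Fin J)} (hH : Orthonormal 𝕜 H) :
    Orthonormal 𝕜 (cons 0 ∘ H) :=
  hH.comp_of_inner_eq fun v w => by simp

def adjoinUnitVector (H : Fin N → EuclideanSpace 𝕜 (Fin J)) :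
    Fin (N + 1) → EuclideanSpace 𝕜 (Fin (J + 1)) :=
  Fin.cons (cons 1 0) (cons 0 ∘ H)

@[simp] lemma adjoinUnitVector_zero (H : Fin N → EuclideanSpace 𝕜 (Fin J)) :
    adjoinUnitVector H 0 = cons 1 0 := rfl

@[simp] lemma adjoinUnitVector_succ (H : Fin N → EuclideanSpace 𝕜 (Fin J)) (n : Fin N) :
    adjoinUnitVector H n.succ = cons 0 (H n) := rfl

lemma occupation_adjoinUnitVector (H : Fin N → EuclideanSpace 𝕜 (Fin J)) :
    occupation (adjoinUnitVector H) = Fin.cons 1 (occupation H) := by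
  ext j
  cases j using Fin.cases <;> simp [occupation, Fin.sum_univ_succ]

lemma Orthonormal.adjoinUnitVector {H : Fin N → EuclideanSpace 𝕜 (Fin J)}
    (hH : Orthonormal 𝕜 H) : Orthonormal 𝕜 (adjoinUnitVector H) := by
  rw [orthonormal_iff_ite] at hH ⊢
  intro i j
  cases i using Fin.cases <;> cases j using Fin.cases <;>
    simp only [adjoinUnitVector_zero, adjoinUnitVector_succ, inner_cons_cons, hH] <;>
    simp [(Fin.succ_ne_zero _).symm]

end Occupation

variable (𝕜) in
def IsOccupationNumbers {κ : Type*} [Fintype κ] (N : ℕ) (lam : κ → ℝ) : Prop :=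
  ∃ G : Fin N → EuclideanSpace 𝕜 κ, Orthonormal 𝕜 G ∧ occupation G = lam

namespace IsOccupationNumbers

variable {κ : Type*} [Fintype κ] {N J : ℕ}

lemma zero : IsOccupationNumbers 𝕜 0 (0 : κ → ℝ) :=
  ⟨Fin.elim0, by simp, by ext; simp [occupation]⟩

lemma cons_one {μ : Fin J → ℝ} (h : IsOccupationNumbers 𝕜 N μ) :
    IsOccupationNumbers 𝕜 (N + 1) (Fin.cons 1 μ) := by
  obtain ⟨H, hH, rfl⟩ := h
  exact ⟨adjoinUnitVector H, hH.adjoinUnitVector, occupation_adjoinUnitVector H⟩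

lemma of_planeRotation [DecidableEq κ] {G : Fin N → EuclideanSpace 𝕜 κ}
    (hG : Orthonormal 𝕜 G) {a b : κ} (hab : a ≠ b) (hsupp : ∀ n, G n a = 0 ∨ G n b = 0)
    {lam : κ → ℝ} (hrest : ∀ j, j ≠ a → j ≠ b → lam j = occupation G j)
    (hsum : lam a + lam b = occupation G a + occupation G b)
    (hseg : lam a ∈ segment ℝ (occupation G a) (occupation G b)) :
    IsOccupationNumbers 𝕜 N lam := by
  obtain ⟨p, q, hp, hq, hpq, hla⟩ := hseg
  have hα : √p ^ 2 = p := Real.sq_sqrt hp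
  have hβ : √q ^ 2 = q := Real.sq_sqrt hq
  refine ⟨planeRotation a b (√p) (√q) ∘ G,
    hG.comp_of_inner_eq (inner_planeRotation hab (by rw [hα, hβ, hpq])), funext fun j => ?_⟩
  rw [occupation_planeRotation_comp hsupp, hα, hβ]
  simp only [smul_eq_mul] at hla
  split_ifs with hja hjb
  · rw [hja, hla]
  · subst hjb
    linear_combination -hsum - hla + (occupation G a + occupation G j) * hpq
  · exact (hrest j hja hjb).symm

lemma of_planeRotation_zero_one {G : Fin N → EuclideanSpace 𝕜 (Fin (J + 2))}
    (hG : Orthonormal 𝕜 G) (hsupp : ∀ n, G n 0 = 0 ∨ G n 1 = 0) {lam : Fin (J + 2) → ℝ}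
    (hrest : ∀ k : Fin J, lam k.succ.succ = occupation G k.succ.succ)
    (hsum : lam 0 + lam 1 = occupation G 0 + occupation G 1)
    (hseg : lam 0 ∈ segment ℝ (occupation G 0) (occupation G 1)) :
    IsOccupationNumbers 𝕜 N lam := by
  refine of_planeRotation hG zero_ne_one hsupp (fun j hj0 hj1 => ?_) hsum hseg
  obtain ⟨i, rfl⟩ := Fin.exists_succ_eq.mpr hj0
  obtain ⟨k, rfl⟩ : ∃ k : Fin J, k.succ = i :=
    Fin.exists_succ_eq.mpr fun hi => hj1 (by simp [hi])
  exact hrest k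

lemma of_merge {lam : Fin (J + 2) → ℝ} (h0 : 0 ≤ lam 0) (h1 : 0 ≤ lam 1)
    (h : IsOccupationNumbers 𝕜 N (Fin.cons (lam 0 + lam 1) fun k => lam k.succ.succ)) :
    IsOccupationNumbers 𝕜 N lam := by
  obtain ⟨H, hH, hocc⟩ := h
  have hGocc := occupation_cons_zero_comp H
  rw [hocc] at hGocc
  refine of_planeRotation_zero_one hH.cons_zero_comp (fun n => Or.inl rfl)
    (fun k => by simp [hGocc]) (by simp [hGocc]) ?_
  simp only [hGocc, Fin.cons_zero, Fin.cons_one]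
  rw [segment_eq_Icc (by linarith)]
  exact ⟨h0, by linarith⟩

lemma succ_of_merge_sub_one {lam : Fin (J + 2) → ℝ} (h0 : lam 0 ≤ 1) (h1 : lam 1 ≤ 1)
    (h : IsOccupationNumbers 𝕜 N (Fin.cons (lam 0 + lam 1 - 1) fun k => lam k.succ.succ)) :
    IsOccupationNumbers 𝕜 (N + 1) lam := by
  obtain ⟨H, hH, hocc⟩ := h
  have hGocc := occupation_adjoinUnitVector H
  rw [hocc] at hGocc
  refine of_planeRotation_zero_one hH.adjoinUnitVector
    (Fin.cases (Or.inr rfl) fun n => Or.inl rfl) (fun k => by simp [hGocc]) (by simp [hGocc]) ?_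
  simp only [hGocc, Fin.cons_zero, Fin.cons_one]
  rw [segment_symm, segment_eq_Icc (by linarith)]
  exact ⟨by linarith, h0⟩

end IsOccupationNumbers

theorem isOccupationNumbers_of_sum_eq :
    ∀ {J : ℕ} (N : ℕ) (lam : Fin J → ℝ), (∀ j, 0 ≤ lam j) → (∀ j, lam j ≤ 1) →
      ∑ j, lam j = N → IsOccupationNumbers 𝕜 N lam
  | _, 0, lam, h0, _, hsum => by
    obtain rfl : lam = 0 := funext fun j =>
      (sum_eq_zero_iff_of_nonneg fun j _ => h0 j).1 (by simpa using hsum) j (mem_univ j)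
    exact .zero
  | 0, N + 1, _, _, _, hsum => by
    simp only [univ_eq_empty, sum_empty, Nat.cast_add_one] at hsum
    exact absurd hsum.symm (by positivity)
  | 1, N + 1, lam, _, h1, hsum => by
    simp only [Fin.sum_univ_one, Nat.cast_add_one] at hsum
    obtain rfl : N = 0 := by
      exact_mod_cast (show (N : ℝ) ≤ 0 by linarith [h1 0]).antisymm N.cast_nonneg
    obtain rfl : lam = Fin.cons 1 0 := funext fun j => by fin_cases j; simp [hsum]
    exact IsOccupationNumbers.zero.cons_one
  | J + 2, N + 1, lam, h0, h1, hsum => by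
    have hsum' : lam 0 + lam 1 + ∑ k : Fin J, lam k.succ.succ = N + 1 := by
      simpa [Fin.sum_univ_succ, add_assoc] using hsum
    by_cases hs : lam 0 + lam 1 ≤ 1
    · refine .of_merge (h0 0) (h0 1) (isOccupationNumbers_of_sum_eq (N + 1) _ ?_ ?_ ?_)
      · exact Fin.cases (add_nonneg (h0 0) (h0 1)) fun k => h0 _
      · exact Fin.cases hs fun k => h1 _
      · simpa [Fin.sum_univ_succ] using hsum'
    · refine .succ_of_merge_sub_one (h1 0) (h1 1) (isOccupationNumbers_of_sum_eq N _ ?_ ?_ ?_)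
      · exact Fin.cases (show 0 ≤ lam 0 + lam 1 - 1 by linarith) fun k => h0 _
      · exact Fin.cases (show lam 0 + lam 1 - 1 ≤ 1 by linarith [h1 0, h1 1]) fun k => h1 _
      · simp only [Fin.sum_univ_succ, Fin.cons_zero, Fin.cons_succ]
        linarith

theorem lieb_occupation_numbers_general (N J : ℕ)
    (lam : Fin J → ℝ) (hlam0 : ∀ j, 0 ≤ lam j) (hlam1 : ∀ j, lam j ≤ 1)
    (hsum : ∑ j, lam j = (N : ℝ)) :
    ∃ G : Fin N → EuclideanSpace ℂ (Fin J), Orthonormal ℂ G ∧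
      ∀ j : Fin J, ∑ n : Fin N, ‖G n j‖ ^ 2 = lam j := by
  obtain ⟨G, hG, hocc⟩ := isOccupationNumbers_of_sum_eq (𝕜 := ℂ) N lam hlam0 hlam1 hsum
  exact ⟨G, hG, congrFun hocc⟩

/-- **Lieb's lemma on prescribed occupation numbers**: if `0 ≤ λ_j ≤ 1` and `Σ_j λ_j = N`
with `N ≤ J`, then there is an orthonormal family `G⁽¹⁾, …, G⁽ᴺ⁾` in `ℂ^J` with
`Σ_n |G⁽ⁿ⁾_j|² = λ_j` for every `j`. -/
theorem lieb_occupation_numbers (N J : ℕ) (hN : 0 < N) (hNJ : N ≤ J)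
    (lam : Fin J → ℝ) (hlam0 : ∀ j, 0 ≤ lam j) (hlam1 : ∀ j, lam j ≤ 1)
    (hsum : ∑ j, lam j = (N : ℝ)) :
    ∃ G : Fin N → EuclideanSpace ℂ (Fin J), Orthonormal ℂ G ∧
      ∀ j : Fin J, ∑ n : Fin N, ‖G n j‖ ^ 2 = lam j :=
  lieb_occupation_numbers_general N J lam hlam0 hlam1 hsum
end

section
/- Hidden concavity / vertex principle for the diagonalized Hartree–Fock functional: let N ≤ J be positive integers, h : Fin J → ℝ, and V : Fin J → Fin J → ℝ with V_{ij} = V_{ji}, V_{jj} = 0, and V_{ij} > 0 whenever i ≠ j. Define F(λ) := Σ_{j} λ_j h_j + (1/2) Σ_{i,j} λ_i λ_j V_{ij} on K_N := { λ ∈ ℝ^J : 0 ≤ λ_j ≤ 1 for all j and Σ_j λ_j = N }. If λ ∈ K_N satisfies F(λ) ≤ F(μ) for all μ ∈ K_N, then λ_j ∈ {0,1} for every j. -/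
/-- **Hidden concavity / vertex principle** for the diagonalized Hartree–Fock functional:
a minimizer of `F(λ) = Σ_j λ_j h_j + (1/2) Σ_{i,j} λ_i λ_j V_{ij}` over
`K_N = {λ : 0 ≤ λ_j ≤ 1, Σ_j λ_j = N}` with `V` symmetric, vanishing on the diagonal and
strictly positive off the diagonal, has all components equal to `0` or `1`. -/
theorem minimizer_is_vertex (J N : ℕ) (hN : 0 < N) (hNJ : N ≤ J)
    (h : Fin J → ℝ) (V : Fin J → Fin J → ℝ)
    (hVsym : ∀ i j, V i j = V j i) (hVdiag : ∀ j, V j j = 0)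
    (hVpos : ∀ i j, i ≠ j → 0 < V i j)
    (lam : Fin J → ℝ)
    (hlam01 : ∀ j, 0 ≤ lam j ∧ lam j ≤ 1) (hlamsum : ∑ j, lam j = (N : ℝ))
    (hmin : ∀ mu : Fin J → ℝ, (∀ j, 0 ≤ mu j ∧ mu j ≤ 1) → ∑ j, mu j = (N : ℝ) →
      (∑ j, lam j * h j) + (1 / 2) * ∑ i, ∑ j, lam i * lam j * V i j
        ≤ (∑ j, mu j * h j) + (1 / 2) * ∑ i, ∑ j, mu i * mu j * V i j) :
    ∀ j, lam j = 0 ∨ lam j = 1 := by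
  intro p
  by_contra hp
  push_neg at hp
  obtain ⟨hp0, hp1⟩ := hp
  have hp0' : 0 < lam p := lt_of_le_of_ne (hlam01 p).1 (Ne.symm hp0)
  have hp1' : lam p < 1 := lt_of_le_of_ne (hlam01 p).2 hp1
  -- find a second fractional component
  have hq : ∃ q, q ≠ p ∧ 0 < lam q ∧ lam q < 1 := by
    by_contra hq'
    push_neg at hq'
    have hint : ∀ j ∈ Finset.univ.erase p, lam j = if lam j = 1 then (1:ℝ) else 0 := by
      intro j hj
      have hjp : j ≠ p := Finset.ne_of_mem_erase hj
      rcases lt_or_ge 0 (lam j) with h0 | h0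
      · have := hq' j hjp h0
        have : lam j = 1 := le_antisymm (hlam01 j).2 this
        simp [this]
      · have : lam j = 0 := le_antisymm h0 (hlam01 j).1
        rw [this]; simp
    have hsum1 : ∑ j ∈ Finset.univ.erase p, lam j
        = ((Finset.univ.erase p).filter (fun j => lam j = 1)).card := by
      rw [Finset.sum_congr rfl hint, Finset.sum_boole]
    have hsum2 : ∑ j ∈ Finset.univ.erase p, lam j = (N : ℝ) - lam p := by
      rw [Finset.sum_erase_eq_sub (Finset.mem_univ p), hlamsum]
    set m := ((Finset.univ.erase p).filter (fun j => lam j = 1)).card with hm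
    have hlp : lam p = (N : ℝ) - m := by rw [hsum1] at hsum2; linarith
    have h1 : (m : ℝ) < N := by rw [hlp] at hp0'; linarith
    have h2 : (N : ℝ) < m + 1 := by rw [hlp] at hp1'; linarith
    have h1' : m < N := by exact_mod_cast h1
    have h2' : N < m + 1 := by exact_mod_cast h2
    omega
  obtain ⟨q, hqp, hq0, hq1⟩ := hq
  set ε := min (min (lam p) (1 - lam p)) (min (lam q) (1 - lam q)) with hε
  have hεpos : 0 < ε := by
    apply lt_min (lt_min hp0' (by linarith)) (lt_min hq0 (by linarith))
  have hε1 : ε ≤ lam p := le_trans (min_le_left _ _) (min_le_left _ _)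
  have hε2 : ε ≤ 1 - lam p := le_trans (min_le_left _ _) (min_le_right _ _)
  have hε3 : ε ≤ lam q := le_trans (min_le_right _ _) (min_le_left _ _)
  have hε4 : ε ≤ 1 - lam q := le_trans (min_le_right _ _) (min_le_right _ _)
  -- the perturbation
  set d : Fin J → ℝ := fun j => (if j = p then (1:ℝ) else 0) - if j = q then 1 else 0 with hd
  have sumd : ∀ f : Fin J → ℝ, ∑ i, d i * f i = f p - f q := by
    intro f
    simp only [hd, sub_mul, Finset.sum_sub_distrib, ite_mul, one_mul, zero_mul]
    rw [Finset.sum_ite_eq' Finset.univ p f, Finset.sum_ite_eq' Finset.univ q f]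
    simp
  have hdp : d p = 1 := by simp [hd, hqp.symm.symm, (Ne.symm hqp : p ≠ q)]
  have hdq : d q = -1 := by simp [hd, hqp]
  have hdother : ∀ j, j ≠ p → j ≠ q → d j = 0 := by intro j h1 h2; simp [hd, h1, h2]
  have key : ∀ t : ℝ, |t| ≤ ε →
      0 ≤ t * ((h p - h q) + (∑ j, lam j * V p j - ∑ j, lam j * V q j))
        + t ^ 2 * (-(V p q)) := by
    intro t ht
    have ht1 : -ε ≤ t := neg_le_of_abs_le ht
    have ht2 : t ≤ ε := le_of_abs_le ht
    set mu : Fin J → ℝ := fun j => lam j + t * d j with hmu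
    have hc : ∀ j, 0 ≤ mu j ∧ mu j ≤ 1 := by
      intro j
      rcases eq_or_ne j p with rfl | hjp
      · simp only [hmu, hdp, mul_one]; constructor <;> linarith
      rcases eq_or_ne j q with rfl | hjq
      · simp only [hmu, hdq, mul_neg, mul_one]; constructor <;> linarith
      · simp only [hmu, hdother j hjp hjq, mul_zero, add_zero]; exact hlam01 j
    have hcs : ∑ j, mu j = (N : ℝ) := by
      simp only [hmu]
      rw [Finset.sum_add_distrib, hlamsum, ← Finset.mul_sum]
      have : ∑ j, d j = 0 := by
        have := sumd (fun _ => (1:ℝ))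
        simpa using this
      rw [this]; ring
    have hlin : ∑ j, mu j * h j = (∑ j, lam j * h j) + t * (h p - h q) := by
      simp only [hmu]
      rw [← sumd h, Finset.mul_sum, ← Finset.sum_add_distrib]
      apply Finset.sum_congr rfl; intro j _; ring
    have hquad : ∑ i, ∑ j, mu i * mu j * V i j
        = (∑ i, ∑ j, lam i * lam j * V i j)
          + t * (∑ j, lam j * V p j - ∑ j, lam j * V q j)
          + t * (∑ i, lam i * V i p - ∑ i, lam i * V i q)
          + t ^ 2 * (V p p - V p q - V q p + V q q) := by
      have inner : ∀ i, ∑ j, mu i * mu j * V i j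
          = mu i * ((∑ j, lam j * V i j) + t * (V i p - V i q)) := by
        intro i
        rw [← sumd (fun j => V i j), Finset.mul_sum, mul_add, Finset.mul_sum, Finset.mul_sum,
          ← Finset.sum_add_distrib]
        apply Finset.sum_congr rfl
        intro j _; simp only [hmu]; ring
      rw [Finset.sum_congr rfl (fun i _ => inner i)]
      have step : ∀ i, mu i * ((∑ j, lam j * V i j) + t * (V i p - V i q))
          = lam i * (∑ j, lam j * V i j) + t * (lam i * (V i p - V i q))
            + (d i * (t * (∑ j, lam j * V i j)))
            + (d i * (t ^ 2 * (V i p - V i q))) := by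
        intro i; simp only [hmu]; ring
      rw [Finset.sum_congr rfl (fun i _ => step i)]
      rw [Finset.sum_add_distrib, Finset.sum_add_distrib, Finset.sum_add_distrib,
        sumd, sumd, ← Finset.mul_sum]
      have h3 : ∀ i, lam i * (∑ j, lam j * V i j) = ∑ j, lam i * lam j * V i j := by
        intro i; rw [Finset.mul_sum]; apply Finset.sum_congr rfl; intro j _; ring
      rw [Finset.sum_congr rfl (fun i _ => h3 i)]
      simp only [mul_sub, Finset.sum_sub_distrib]
      ring
    have := hmin mu hc hcs
    rw [hlin, hquad] at this
    have hsym1 : ∑ i, lam i * V i p = ∑ j, lam j * V p j := by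
      apply Finset.sum_congr rfl; intro i _; rw [hVsym]
    have hsym2 : ∑ i, lam i * V i q = ∑ j, lam j * V q j := by
      apply Finset.sum_congr rfl; intro i _; rw [hVsym]
    rw [hsym1, hsym2, hVdiag p, hVdiag q, hVsym q p] at this
    nlinarith [this]
  have k1 := key ε (by rw [abs_of_pos hεpos])
  have k2 := key (-ε) (by rw [abs_neg, abs_of_pos hεpos])
  have hVpq := hVpos p q (Ne.symm hqp)
  nlinarith [sq_nonneg ε, mul_pos (mul_pos hεpos hεpos) hVpq]
end

section
/- Positivity constraints on the blocks of a generalized one-particle density matrix: let γ, α, δ ∈ M_d(ℂ) and form the block matrix M := fromBlocks γ α αᴴ δ ∈ M_{2d}(ℂ). If both M and 1 − M are positive semidefinite, then γ − γ² − α·αᴴ is positive semidefinite; in particular, Re Tr(α·αᴴ) ≤ Re Tr(γ − γ²), i.e., the Hilbert–Schmidt norm squared of the pairing block α is bounded by the trace of γ − γ². -/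
open Matrix
open scoped ComplexOrder

namespace Matrix

variable {n R : Type*} [Fintype n] [Ring R]

theorem PosSemidef.sub_mul_self [DecidableEq n] [PartialOrder R] [StarRing R] [AddLeftMono R]
    {M : Matrix n n R} (hM : M.PosSemidef)
    (hM₁ : (1 - M).PosSemidef) : (M - M * M).PosSemidef := by
  -- `M - M² = M (1 - M) M + (1 - M) M (1 - M)`, a sum of two congruences of positive matrices.
  have hsplit : M - M * M = M * (1 - M) * Mᴴ + (1 - M) * M * (1 - M)ᴴ := by
    rw [hM.isHermitian.eq, hM₁.isHermitian.eq]
    simp only [mul_sub, sub_mul, mul_one, one_mul, mul_assoc]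
    abel
  rw [hsplit]
  exact (hM₁.mul_mul_conjTranspose_same M).add (hM.mul_mul_conjTranspose_same (1 - M))

theorem toBlocks₁₁_sub_mul_self_fromBlocks {m : Type*} [Fintype m] (A : Matrix m m R)
    (B : Matrix m n R) (C : Matrix n m R) (D : Matrix n n R) :
    (fromBlocks A B C D - fromBlocks A B C D * fromBlocks A B C D).toBlocks₁₁ =
      A - A * A - B * C := by
  ext i j
  simp [fromBlocks_multiply, toBlocks₁₁, sub_sub]

end Matrix

/-- **Positivity constraints on the blocks of a generalized one-particle density matrix**:
if `M = [[γ, α], [αᴴ, δ]]` satisfies `0 ⪯ M ⪯ 1`, then `γ − γ² − α αᴴ ⪰ 0`; in particular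
`Re Tr(α αᴴ) ≤ Re Tr(γ − γ²)`. -/
theorem gpdm_block_positivity (d : ℕ) (γ α δ : Matrix (Fin d) (Fin d) ℂ)
    (hM : (Matrix.fromBlocks γ α αᴴ δ).PosSemidef)
    (hM1 : ((1 : Matrix (Fin d ⊕ Fin d) (Fin d ⊕ Fin d) ℂ)
        - Matrix.fromBlocks γ α αᴴ δ).PosSemidef) :
    (γ - γ * γ - α * αᴴ).PosSemidef ∧
      ((α * αᴴ).trace).re ≤ ((γ - γ * γ).trace).re := by
  have hblock : (γ - γ * γ - α * αᴴ).PosSemidef := by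
    rw [← toBlocks₁₁_sub_mul_self_fromBlocks γ α αᴴ δ]
    exact (hM.sub_mul_self hM1).submatrix Sum.inl
  refine ⟨hblock, Complex.re_le_re ?_⟩
  simpa [trace_sub] using hblock.trace_nonneg
end

section
/- Minimization over rank-N projections yields the sum of the N lowest eigenvalues (the projection 𝟙_N(A) onto the lowest N eigenvalues minimizes the trace): let A ∈ M_d(ℂ) be Hermitian with eigenvalues (with multiplicity) μ : Fin d → ℝ, and let 1 ≤ N ≤ d. Then the infimum of Re Tr(A·P) over all Hermitian matrices P with P² = P and Tr P = N is attained, and it equals the minimum over all N-element subsets T of Fin d of Σ_{i∈T} μ_i (the sum of the N smallest eigenvalues of A counted with multiplicity). -/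
/-!
Conjugating by the eigenvector unitary `U` of `A` turns `Re Tr(A P)` into `∑ i, μ i * q i`, where
`q i = Re (U⋆ P U) i i`. Since `U⋆ P U` is again a projection, `0 ≤ q ≤ 1` and `∑ i, q i = N`.
On this polytope the linear form is minimised by the indicator of a threshold set `T` of size `N`
(`μ ≤ c` on `T`, `c ≤ μ` off `T`), because every term of `∑ i, (μ i - c) * (q i - 1_T i)` is
nonnegative. The same inequality shows that `T` has the least eigenvalue sum among `N`-subsets,
and the projection `U diag(1_T) U⋆` attains it.
-/

open Matrix
open scoped ComplexOrder MatrixOrder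

section Threshold

variable {ι : Type*} [Fintype ι]

theorem Finset.exists_card_eq_threshold {α : Type*} [LinearOrder α] [Nonempty α] (μ : ι → α)
    {N : ℕ} (hN : N ≤ Fintype.card ι) :
    ∃ T : Finset ι, T.card = N ∧ ∃ c, (∀ i ∈ T, μ i ≤ c) ∧ ∀ i ∉ T, c ≤ μ i := by
  classical
  induction N with
  | zero =>
    obtain ⟨c, hc⟩ := (Set.finite_range μ).bddBelow
    exact ⟨∅, rfl, c, by simp, fun i _ => hc ⟨i, rfl⟩⟩
  | succ N ih =>
    obtain ⟨T, hT, c, hle, hge⟩ := ih (by omega)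
    have hcompl : Tᶜ.Nonempty := by
      rw [← Finset.card_pos, Finset.card_compl]
      omega
    obtain ⟨j, hj, hmin⟩ := Tᶜ.exists_min_image μ hcompl
    rw [Finset.mem_compl] at hj
    refine ⟨insert j T, by rw [Finset.card_insert_of_notMem hj, hT], μ j, ?_, ?_⟩
    · simp only [Finset.mem_insert, forall_eq_or_imp, le_refl, true_and]
      exact fun i hi => (hle i hi).trans (hge j hj)
    · intro i hi
      rw [Finset.mem_insert, not_or] at hi
      exact hmin i (Finset.mem_compl.2 hi.2)

variable {R : Type*} [CommRing R] [LinearOrder R] [IsOrderedRing R]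
  {μ : ι → R} {T : Finset ι} {c : R}

theorem Finset.sum_le_sum_mul_of_threshold (hle : ∀ i ∈ T, μ i ≤ c) (hge : ∀ i ∉ T, c ≤ μ i)
    {t : ι → R} (ht0 : ∀ i, 0 ≤ t i) (ht1 : ∀ i, t i ≤ 1) (hsum : ∑ i, t i = T.card) :
    ∑ i ∈ T, μ i ≤ ∑ i, μ i * t i := by
  classical
  set s : ι → R := fun i => if i ∈ T then 1 else 0
  have hs : ∑ i, s i = T.card := by simp [s]
  have hsT : ∑ i ∈ T, μ i = ∑ i, μ i * s i := by simp [s]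
  have hterm : ∀ i, 0 ≤ (μ i - c) * (t i - s i) := by
    intro i
    by_cases hi : i ∈ T
    · simp only [s, if_pos hi]
      exact mul_nonneg_of_nonpos_of_nonpos (sub_nonpos.2 (hle i hi)) (sub_nonpos.2 (ht1 i))
    · simp only [s, if_neg hi, sub_zero]
      exact mul_nonneg (sub_nonneg.2 (hge i hi)) (ht0 i)
  have hexpand : ∑ i, (μ i - c) * (t i - s i)
      = ∑ i, μ i * t i - ∑ i, μ i * s i - c * (∑ i, t i - ∑ i, s i) := by
    simp only [Finset.mul_sum, ← Finset.sum_sub_distrib]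
    exact Finset.sum_congr rfl fun i _ => by ring
  have hnonneg := Finset.sum_nonneg fun i (_ : i ∈ Finset.univ) => hterm i
  rwa [hexpand, hsum, hs, sub_self, mul_zero, sub_zero, sub_nonneg, ← hsT] at hnonneg

theorem Finset.isLeast_sum_of_threshold (hle : ∀ i ∈ T, μ i ≤ c) (hge : ∀ i ∉ T, c ≤ μ i) :
    IsLeast {s | ∃ S : Finset ι, S.card = T.card ∧ s = ∑ i ∈ S, μ i} (∑ i ∈ T, μ i) := by
  classical
  refine ⟨⟨T, rfl, rfl⟩, ?_⟩
  rintro _ ⟨S, hS, rfl⟩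
  have := sum_le_sum_mul_of_threshold hle hge (t := fun i => if i ∈ S then 1 else 0)
    (fun i => by split_ifs <;> simp) (fun i => by split_ifs <;> simp) (by simp [hS])
  simpa using this

end Threshold

section Projection

variable {n 𝕜 : Type*} [Fintype n] [DecidableEq n] [RCLike 𝕜]

theorem Matrix.trace_conjStarAlgAut (u : unitary (Matrix n n 𝕜)) (X : Matrix n n 𝕜) :
    (Unitary.conjStarAlgAut 𝕜 _ u X).trace = X.trace := by
  rw [Unitary.conjStarAlgAut_apply, trace_mul_cycle, Unitary.coe_star_mul_self, one_mul]

theorem Matrix.IsHermitian.re_trace_mul_conjStarAlgAut {A : Matrix n n 𝕜} (hA : A.IsHermitian)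
    (Q : Matrix n n 𝕜) :
    RCLike.re (A * Unitary.conjStarAlgAut 𝕜 _ hA.eigenvectorUnitary Q).trace
      = ∑ i, hA.eigenvalues i * RCLike.re (Q i i) := by
  nth_rw 1 [hA.spectral_theorem]
  rw [← map_mul, trace_conjStarAlgAut]
  simp [trace, diagonal_mul, map_sum]

theorem Matrix.isStarProjection_diagonal_indicator (T : Finset n) :
    IsStarProjection (diagonal fun i => if i ∈ T then (1 : 𝕜) else 0) := by
  refine ⟨?_, ?_⟩
  · rw [IsIdempotentElem, diagonal_mul_diagonal]
    congr 1; ext i; by_cases hi : i ∈ T <;> simp [hi]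
  · rw [IsSelfAdjoint, star_eq_conjTranspose, diagonal_conjTranspose]
    congr 1; ext i; by_cases hi : i ∈ T <;> simp [hi]

variable {P : Matrix n n 𝕜}

theorem IsStarProjection.re_diag_mem_Icc (hP : IsStarProjection P) (i : n) :
    RCLike.re (P i i) ∈ Set.Icc 0 1 := by
  have h0 : 0 ≤ P i i := (nonneg_iff_posSemidef.1 hP.nonneg).diag_nonneg
  have h1 : 0 ≤ (1 - P) i i := (nonneg_iff_posSemidef.1 hP.one_sub_nonneg).diag_nonneg
  rw [Matrix.sub_apply, one_apply_eq, sub_nonneg] at h1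
  exact ⟨(RCLike.nonneg_iff.1 h0).1, by simpa using RCLike.re_le_re h1⟩

theorem IsStarProjection.sum_le_sum_mul_re_diag_of_threshold (hP : IsStarProjection P)
    {μ : n → ℝ} {T : Finset n} {c : ℝ} (hle : ∀ i ∈ T, μ i ≤ c) (hge : ∀ i ∉ T, c ≤ μ i)
    (htr : P.trace = T.card) :
    ∑ i ∈ T, μ i ≤ ∑ i, μ i * RCLike.re (P i i) := by
  refine Finset.sum_le_sum_mul_of_threshold hle hge (fun i => (hP.re_diag_mem_Icc i).1)
    (fun i => (hP.re_diag_mem_Icc i).2) ?_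
  simpa [trace, map_sum] using congrArg RCLike.re htr

end Projection

theorem min_trace_over_projections_general (d N : ℕ) (hNd : N ≤ d)
    (A : Matrix (Fin d) (Fin d) ℂ) (hA : A.IsHermitian) :
    IsLeast {r : ℝ | ∃ P : Matrix (Fin d) (Fin d) ℂ,
        P.IsHermitian ∧ P * P = P ∧ P.trace = (N : ℂ) ∧ r = ((A * P).trace).re}
      (sInf {s : ℝ | ∃ T : Finset (Fin d), T.card = N ∧ s = ∑ i ∈ T, hA.eigenvalues i}) := by
  obtain ⟨T, rfl, c, hle, hge⟩ :=
    Finset.exists_card_eq_threshold hA.eigenvalues (N := N) (by simpa using hNd)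
  rw [(Finset.isLeast_sum_of_threshold hle hge).csInf_eq]
  let conj := Unitary.conjStarAlgAut ℂ (Matrix (Fin d) (Fin d) ℂ) hA.eigenvectorUnitary
  constructor
  · have hP := (isStarProjection_diagonal_indicator (𝕜 := ℂ) T).map conj
    refine ⟨_, hP.isSelfAdjoint, hP.isIdempotentElem, ?_, ?_⟩
    · rw [trace_conjStarAlgAut]
      simp
    · rw [← RCLike.re_to_complex, hA.re_trace_mul_conjStarAlgAut]
      simp [apply_ite Complex.re]
  · rintro _ ⟨P, hPH, hPP, hPtr, rfl⟩
    have hP : IsStarProjection P := ⟨hPP, hPH⟩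
    have hPconj : P = conj (conj.symm P) := (conj.apply_symm_apply P).symm
    rw [hPconj, ← RCLike.re_to_complex, hA.re_trace_mul_conjStarAlgAut]
    refine (hP.map conj.symm).sum_le_sum_mul_re_diag_of_threshold hle hge ?_
    rw [← hPtr, ← trace_conjStarAlgAut hA.eigenvectorUnitary, ← hPconj]

/-- **Minimization over rank-`N` projections yields the sum of the `N` lowest eigenvalues**:
for a Hermitian matrix `A` with eigenvalues `μ`, the infimum of `Re Tr(A P)` over Hermitian
idempotents `P` of trace `N` is attained and equals the minimum over `N`-element subsets `T`
of `Fin d` of `Σ_{i∈T} μ_i`. -/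
theorem min_trace_over_projections (d N : ℕ) (hN1 : 1 ≤ N) (hNd : N ≤ d)
    (A : Matrix (Fin d) (Fin d) ℂ) (hA : A.IsHermitian) :
    IsLeast {r : ℝ | ∃ P : Matrix (Fin d) (Fin d) ℂ,
        P.IsHermitian ∧ P * P = P ∧ P.trace = (N : ℂ) ∧ r = ((A * P).trace).re}
      (sInf {s : ℝ | ∃ T : Finset (Fin d), T.card = N ∧ s = ∑ i ∈ T, hA.eigenvalues i}) :=
  min_trace_over_projections_general d N hNd A hA
end
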